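/- arXiv:1401.2794 — 3 statements merged into one kernel-verified Lean document; each statement's English description precedes it below -/
import Mathlib

section
/- Let C be an [n,k] linear code over F_p with parity check matrix H, and let H' be a non-negative integral matrix with H = H' mod p. Then the code ideal I(C) = ⟨x^a − x^b : a − b ∈ C⟩ + ⟨x_i^p − 1 : 1 ≤ i ≤ n⟩ in K[x_1,…,x_n] equals { f(x, 1) : f ∈ I_{H'(p)} }, the image of the toric ideal of the extended matrix H'(p) = (H' | p·I_m) under substituting 1 for all y-variables. -/
open MvPolynomial

/-- The code ideal I(C) = ⟨x^a − x^b : (a − b mod p) ∈ C⟩ + ⟨x_i^p − 1⟩. -/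
noncomputable def codeIdeal (p : ℕ) (K : Type*) [Field K] {n : ℕ}
    (C : Submodule (ZMod p) (Fin n → ZMod p)) : Ideal (MvPolynomial (Fin n) K) :=
  Ideal.span
    ({f | ∃ a b : Fin n →₀ ℕ,
        (fun i => ((a i : ZMod p) - (b i : ZMod p))) ∈ C ∧
        f = monomial a (1 : K) - monomial b 1} ∪
     {f | ∃ i : Fin n, f = X i ^ p - 1})

/-- The toric ideal of the extended matrix A(p) = (A | p·I_m) for a non-negative
integral m×n matrix A: the kernel of x_i ↦ ∏_j y_j^{A j i}, y-variable j ↦ y_j^p. -/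
noncomputable def toricIdealExt (p : ℕ) (K : Type*) [Field K] {m n : ℕ}
    (A : Matrix (Fin m) (Fin n) ℕ) : Ideal (MvPolynomial (Fin (n) ⊕ Fin m) K) :=
  RingHom.ker (MvPolynomial.aeval
    (Sum.elim (fun i => ∏ j : Fin m, (X j : MvPolynomial (Fin m) K) ^ A j i)
              (fun j => (X j : MvPolynomial (Fin m) K) ^ p))).toRingHom

/-! For `⊆`: if `a - b ∈ C` then `H'a ≡ H'b (mod p)`, so `H'a + p v = H'b + p w` for some
`v, w ∈ ℕ^m` and `x^a y^v - x^b y^w` is a toric binomial of `H'(p)` specializing to `x^a - x^b`;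
`x_i^p - 1` is itself such a binomial `x^{p e_i} - x^0`.
For `⊇`: pick `B` with `H B H = H` and send `y_j` to the class of `x^{b_j}` in `K[x] / I(C)`,
where `b_j` lifts the `j`-th column of `B`. As `H (B H e_i - e_i) = 0` and `p b_j ≡ 0`, this
sends the toric images of `x_i` and `y_j` to `x_i` and `1`, so `f(x, 1) ∈ I(C)` whenever `f`
lies in the toric ideal. -/

open Matrix

theorem Nat.ModEq.add_mul_div_eq_add_mul_div {p x y : ℕ} (h : x ≡ y [MOD p]) :
    x + p * (y / p) = y + p * (x / p) := by
  have hx := Nat.mod_add_div x p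
  have hy := Nat.mod_add_div y p
  unfold Nat.ModEq at h
  linarith

theorem LinearMap.exists_comp_comp_eq_self {K V W : Type*} [DivisionRing K] [AddCommGroup V]
    [Module K V] [AddCommGroup W] [Module K W] (f : V →ₗ[K] W) :
    ∃ g : W →ₗ[K] V, f ∘ₗ g ∘ₗ f = f := by
  obtain ⟨π, hπ⟩ := (LinearMap.range f).subtype.exists_leftInverse_of_injective
    (Submodule.ker_subtype _)
  obtain ⟨s, hs⟩ := f.rangeRestrict.exists_rightInverse_of_surjective f.range_rangeRestrict
  refine ⟨s ∘ₗ π, ?_⟩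
  calc f ∘ₗ (s ∘ₗ π) ∘ₗ f
      = (LinearMap.range f).subtype ∘ₗ (f.rangeRestrict ∘ₗ s) ∘ₗ
          (π ∘ₗ (LinearMap.range f).subtype) ∘ₗ f.rangeRestrict := rfl
    _ = f := by rw [hs, hπ]; rfl

theorem Matrix.exists_mul_mul_self_eq {K m n : Type*} [Field K] [Fintype m] [Fintype n]
    [DecidableEq m] [DecidableEq n] (H : Matrix m n K) : ∃ B : Matrix n m K, H * B * H = H := by
  obtain ⟨g, hg⟩ := (Matrix.toLin' H).exists_comp_comp_eq_self
  refine ⟨LinearMap.toMatrix' g, Matrix.toLin'.injective ?_⟩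
  rw [Matrix.toLin'_mul, Matrix.toLin'_mul, Matrix.toLin'_toMatrix', LinearMap.comp_assoc, hg]

theorem MvPolynomial.prod_X_pow_eq_monomial_of_fintype {R σ : Type*} [CommSemiring R]
    [Fintype σ] (a : σ →₀ ℕ) :
    ∏ i, X i ^ a i = monomial a (1 : R) := by
  rw [monomial_eq, C_1, one_mul, Finsupp.prod_fintype]
  exact fun _ => pow_zero _

section Specialization

variable {R ι κ : Type*} [CommSemiring R]

noncomputable def evalInrOne : MvPolynomial (ι ⊕ κ) R →ₐ[R] MvPolynomial ι R :=
  aeval (Sum.elim X fun _ => 1)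

theorem evalInrOne_rename_inl (f : MvPolynomial ι R) :
    evalInrOne (rename (Sum.inl : ι → ι ⊕ κ) f) = f := by
  rw [evalInrOne, aeval_rename]
  exact aeval_X_left_apply f

theorem evalInrOne_surjective : Function.Surjective (evalInrOne : MvPolynomial (ι ⊕ κ) R → _) :=
  fun f => ⟨rename Sum.inl f, evalInrOne_rename_inl f⟩

theorem evalInrOne_prod_X_pow [Fintype ι] [Fintype κ] (a : ι → ℕ) (v : κ → ℕ) :
    evalInrOne ((∏ i, X (Sum.inl i) ^ a i) * ∏ j, X (Sum.inr j) ^ v j : MvPolynomial (ι ⊕ κ) R) =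
      ∏ i, X i ^ a i := by
  simp [evalInrOne]

variable [Fintype κ]

noncomputable def toricMap (p : ℕ) (A : Matrix κ ι ℕ) :
    MvPolynomial (ι ⊕ κ) R →ₐ[R] MvPolynomial κ R :=
  aeval (Sum.elim (fun i => ∏ j, X j ^ A j i) fun j => X j ^ p)

theorem toricMap_prod_X_pow [Fintype ι] (p : ℕ) (A : Matrix κ ι ℕ) (a : ι → ℕ) (v : κ → ℕ) :
    toricMap p A ((∏ i, X (Sum.inl i) ^ a i) * ∏ j, X (Sum.inr j) ^ v j : MvPolynomial (ι ⊕ κ) R) =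
      ∏ j, X j ^ ((A *ᵥ a) j + p * v j) := by
  simp only [toricMap, map_mul, map_prod, map_pow, aeval_X, Sum.elim_inl, Sum.elim_inr,
    ← Finset.prod_pow, ← pow_mul, Matrix.mulVec, dotProduct, pow_add, Finset.prod_mul_distrib,
    ← Finset.prod_pow_eq_pow_sum]
  rw [Finset.prod_comm]

end Specialization

theorem mem_toricIdealExt_iff {p : ℕ} {K : Type*} [Field K] {m n : ℕ}
    {A : Matrix (Fin m) (Fin n) ℕ} {f : MvPolynomial (Fin n ⊕ Fin m) K} :
    f ∈ toricIdealExt p K A ↔ toricMap p A f = 0 :=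
  Iff.rfl

section CodeIdeal

variable {p : ℕ} {K : Type*} [Field K] {n m : ℕ} {C : Submodule (ZMod p) (Fin n → ZMod p)}
  {A : Matrix (Fin m) (Fin n) ℕ}

theorem exists_mem_toricIdealExt_evalInrOne_eq (hA : ∀ c ∈ C, A.map (↑) *ᵥ c = 0)
    {a b : Fin n →₀ ℕ} (hab : (fun i => (a i : ZMod p) - b i) ∈ C) :
    ∃ f ∈ toricIdealExt p K A, evalInrOne f = monomial a 1 - monomial b 1 := by
  have hmod : ∀ j, (A *ᵥ ⇑a) j ≡ (A *ᵥ ⇑b) j [MOD p] := by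
    intro j
    rw [← ZMod.natCast_eq_natCast_iff, ← sub_eq_zero]
    simpa [Matrix.mulVec, dotProduct, mul_sub] using congrFun (hA _ hab) j
  refine ⟨((∏ i, X (Sum.inl i) ^ a i) * ∏ j, X (Sum.inr j) ^ ((A *ᵥ ⇑b) j / p) -
      (∏ i, X (Sum.inl i) ^ b i) * ∏ j, X (Sum.inr j) ^ ((A *ᵥ ⇑a) j / p) :
        MvPolynomial (Fin n ⊕ Fin m) K), ?_, ?_⟩
  · rw [mem_toricIdealExt_iff, map_sub, toricMap_prod_X_pow, toricMap_prod_X_pow, sub_eq_zero]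
    simp_rw [(hmod _).add_mul_div_eq_add_mul_div]
  · rw [map_sub, evalInrOne_prod_X_pow, evalInrOne_prod_X_pow,
      prod_X_pow_eq_monomial_of_fintype, prod_X_pow_eq_monomial_of_fintype]

theorem codeIdeal_le_map_toricIdealExt (hA : ∀ c ∈ C, A.map (↑) *ᵥ c = 0) :
    codeIdeal p K C ≤ (toricIdealExt p K A).map evalInrOne := by
  have hbinomial : ∀ a b : Fin n →₀ ℕ, (fun i => (a i : ZMod p) - b i) ∈ C →
      monomial a 1 - monomial b 1 ∈ (toricIdealExt p K A).map evalInrOne := by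
    intro a b hab
    obtain ⟨f, hf, hfab⟩ := exists_mem_toricIdealExt_evalInrOne_eq (K := K) hA hab
    exact hfab ▸ Ideal.mem_map_of_mem _ hf
  refine Ideal.span_le.2 ?_
  rintro _ (⟨a, b, hab, rfl⟩ | ⟨i, rfl⟩)
  · exact hbinomial a b hab
  · rw [X_pow_eq_monomial, ← C_1, ← monomial_zero']
    refine hbinomial _ _ ?_
    convert C.zero_mem using 1
    funext k
    by_cases hk : i = k <;> simp [hk]

theorem mk_monomial_eq_of_sub_mem {a b : Fin n →₀ ℕ} (hab : (fun i => (a i : ZMod p) - b i) ∈ C) :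
    Ideal.Quotient.mk (codeIdeal p K C) (monomial a 1) = Ideal.Quotient.mk _ (monomial b 1) :=
  Ideal.Quotient.eq.2 (Ideal.subset_span (Or.inl ⟨a, b, hab, rfl⟩))

theorem map_toricIdealExt_le_codeIdeal [Fact p.Prime] (hA : ∀ c, A.map (↑) *ᵥ c = 0 → c ∈ C) :
    (toricIdealExt p K A).map evalInrOne ≤ codeIdeal p K C := by
  obtain ⟨B, hB⟩ := (A.map (Nat.cast : ℕ → ZMod p)).exists_mul_mul_self_eq
  let b : Fin m → Fin n →₀ ℕ := fun j => Finsupp.equivFunOnFinite.symm fun k => (B k j).val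
  let ψ : MvPolynomial (Fin m) K →ₐ[K] MvPolynomial (Fin n) K ⧸ codeIdeal p K C :=
    aeval fun j => Ideal.Quotient.mk _ (monomial (b j) 1)
  have hfactor : (Ideal.Quotient.mkₐ K (codeIdeal p K C)).comp evalInrOne =
      ψ.comp (toricMap p A) := by
    apply algHom_ext
    rintro (i | j)
    · simp only [AlgHom.comp_apply, evalInrOne, toricMap, aeval_X, Sum.elim_inl, map_prod,
        map_pow, ψ]
      simp only [Ideal.Quotient.mkₐ_eq_mk, ← map_pow, ← map_prod, monomial_pow, one_pow,
        ← monomial_sum_one]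
      refine (mk_monomial_eq_of_sub_mem (hA _ ?_)).symm
      have hv : (fun k => (((∑ j, A j i • b j) k : ℕ) : ZMod p) - (Finsupp.single i 1 k : ℕ)) =
          B *ᵥ (A.map (↑) *ᵥ Pi.single i 1) - Pi.single i 1 := by
        funext k
        simp [b, Matrix.mulVec, dotProduct, Finsupp.single_apply, Pi.single_apply, eq_comm,
          mul_comm]
      rw [hv, Matrix.mulVec_sub, Matrix.mulVec_mulVec, Matrix.mulVec_mulVec, hB, sub_self]
    · simp only [AlgHom.comp_apply, evalInrOne, toricMap, aeval_X, Sum.elim_inr, map_pow, ψ]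
      simp only [map_one, ← map_pow, monomial_pow, one_pow]
      rw [← map_one (Ideal.Quotient.mk _), ← C_1, ← monomial_zero']
      refine (mk_monomial_eq_of_sub_mem ?_).symm
      convert C.zero_mem using 1
      funext k
      simp
  rw [Ideal.map_le_iff_le_comap]
  intro f hf
  rw [Ideal.mem_comap, ← Ideal.Quotient.eq_zero_iff_mem]
  simpa [mem_toricIdealExt_iff.1 hf] using congrArg (· f) hfactor

end CodeIdeal

theorem stmt_2_general (p : ℕ) (hp : p.Prime) (K : Type*) [Field K] (n m : ℕ)
    (C : Submodule (ZMod p) (Fin n → ZMod p))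
    (H : Matrix (Fin m) (Fin n) (ZMod p))
    (hH : ∀ c, c ∈ C ↔ H.mulVec c = 0)
    (H' : Matrix (Fin m) (Fin n) ℕ) (hH' : ∀ i j, ((H' i j : ZMod p)) = H i j) :
    (codeIdeal p K C : Set (MvPolynomial (Fin n) K)) =
      (MvPolynomial.aeval (Sum.elim MvPolynomial.X (fun _ => 1)) :
          MvPolynomial (Fin n ⊕ Fin m) K →ₐ[K] MvPolynomial (Fin n) K) ''
        (toricIdealExt p K H' : Set (MvPolynomial (Fin n ⊕ Fin m) K)) := by
  have : Fact p.Prime := ⟨hp⟩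
  obtain rfl : H = H'.map (↑) := Matrix.ext fun i j => (hH' i j).symm
  have hmap : codeIdeal p K C = (toricIdealExt p K H').map evalInrOne :=
    le_antisymm (codeIdeal_le_map_toricIdealExt fun c => (hH c).1)
      (map_toricIdealExt_le_codeIdeal fun c => (hH c).2)
  ext g
  rw [SetLike.mem_coe, hmap, Ideal.mem_map_iff_of_surjective _ evalInrOne_surjective]
  rfl

/-- for a code C over F_p with parity check matrix H and non-negative
integral lift H' of H, the code ideal I(C) equals { f(x,1) : f ∈ I_{H'(p)} }. -/
theorem stmt_2 (p : ℕ) (hp : p.Prime) (K : Type*) [Field K] (n m k : ℕ)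
    (C : Submodule (ZMod p) (Fin n → ZMod p)) (hdim : Module.finrank (ZMod p) C = k)
    (H : Matrix (Fin m) (Fin n) (ZMod p))
    (hH : ∀ c, c ∈ C ↔ H.mulVec c = 0)
    (H' : Matrix (Fin m) (Fin n) ℕ) (hH' : ∀ i j, ((H' i j : ZMod p)) = H i j) :
    (codeIdeal p K C : Set (MvPolynomial (Fin n) K)) =
      (MvPolynomial.aeval (Sum.elim MvPolynomial.X (fun _ => 1)) :
          MvPolynomial (Fin n ⊕ Fin m) K →ₐ[K] MvPolynomial (Fin n) K) ''
        (toricIdealExt p K H' : Set (MvPolynomial (Fin n ⊕ Fin m) K)) :=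
  stmt_2_general p hp K n m C H hH H' hH'
end

section
/- For any vectors a, b ∈ F_q^n, the monomials x^{▲a + ▲b} and x^{▲(a+b)} are congruent modulo the ideal I_q encoding the additive structure of F_q, i.e., x^{▲a+▲b} − x^{▲(a+b)} ∈ I_q. -/
open MvPolynomial

/-- The crossing map ▲ : F_q^n → ℕ^{n(q−1)} (as a finitely supported exponent
vector): coordinate α^j ↦ unit vector e_j, 0 ↦ zero vector. -/
noncomputable def crossF {F : Type*} [Field F] [DecidableEq F] (q n : ℕ) (α : F)
    (a : Fin n → F) : (Fin n × Fin (q - 1)) →₀ ℕ :=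
  Finsupp.equivFunOnFinite.symm
    fun ij => if α ^ ((ij.2 : ℕ) + 1) = a ij.1 then 1 else 0

/-- The ideal I_q encoding the additive structure of F_q: generated by
x_{iu}x_{iv} − x_{iw} for α^u + α^v = α^w and x_{iu}x_{iv} − 1 for α^u + α^v = 0. -/
noncomputable def addIdeal {F : Type*} [Field F] (q n : ℕ) (α : F)
    (K : Type*) [Field K] : Ideal (MvPolynomial (Fin n × Fin (q - 1)) K) :=
  Ideal.span
    ({f | ∃ (i : Fin n) (u v w : Fin (q - 1)),
        α ^ ((u : ℕ) + 1) + α ^ ((v : ℕ) + 1) = α ^ ((w : ℕ) + 1) ∧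
        f = X (i, u) * X (i, v) - X (i, w)} ∪
     {f | ∃ (i : Fin n) (u v : Fin (q - 1)),
        α ^ ((u : ℕ) + 1) + α ^ ((v : ℕ) + 1) = 0 ∧
        f = X (i, u) * X (i, v) - 1})

/-!
The crossing map is blockwise: `▲a = ∑ᵢ ▲(aᵢ)` with `▲(aᵢ)` supported in block `i`, so
`x^{▲a}` is a product over coordinates and it suffices to compare `x^{▲c + ▲d}` with
`x^{▲(c + d)}` for single field elements. A zero coordinate contributes the monomial `1`.
Since `α` generates `F_qˣ`, nonzero `c = α^u` and `d = α^v` give `x^{▲c + ▲d} = x_u x_v`,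
and according as `c + d` is `α^w` or `0`, this is a generator `x_u x_v - x_w` or
`x_u x_v - 1` of `I_q` away from `x^{▲(c + d)}`.
-/

theorem pow_succ_injective_of_orderOf_eq {M : Type*} [Monoid M] {α : M} {m : ℕ}
    (hα : orderOf α = m) : Function.Injective fun u : Fin m => α ^ ((u : ℕ) + 1) := by
  subst hα
  intro u v (h : α ^ ((u : ℕ) + 1) = α ^ ((v : ℕ) + 1))
  have huv := ((orderOf_ne_zero_iff.1 u.pos.ne').pow_eq_pow_iff_modEq.1 h).add_right_cancel' 1
  exact Fin.ext <| by rwa [Nat.ModEq, Nat.mod_eq_of_lt u.isLt, Nat.mod_eq_of_lt v.isLt] at huv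

theorem ne_zero_of_orderOf_ne_zero {M₀ : Type*} [MonoidWithZero M₀] [Nontrivial M₀] {α : M₀}
    (hα : orderOf α ≠ 0) : α ≠ 0 :=
  (orderOf_ne_zero_iff.1 hα).isUnit.ne_zero

theorem exists_pow_succ_eq_of_orderOf_eq {F : Type*} [Field F] [Fintype F] {α : F}
    (hα : orderOf α = Fintype.card F - 1) {c : F} (hc : c ≠ 0) :
    ∃ u : Fin (Fintype.card F - 1), α ^ ((u : ℕ) + 1) = c := by
  classical
  have hα₀ : α ≠ 0 :=
    ne_zero_of_orderOf_ne_zero (by have := Fintype.one_lt_card (α := F); omega)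
  let f : Fin (Fintype.card F - 1) → {x : F // x ≠ 0} := fun u =>
    ⟨α ^ ((u : ℕ) + 1), pow_ne_zero _ hα₀⟩
  have hf : Function.Bijective f := by
    refine (Fintype.bijective_iff_injective_and_card f).2 ⟨fun u v h => ?_, ?_⟩
    · exact pow_succ_injective_of_orderOf_eq hα (congrArg Subtype.val h)
    · rw [Fintype.card_fin, Fintype.card_subtype_compl, Fintype.card_subtype_eq]
  obtain ⟨u, hu⟩ := hf.surjective ⟨c, hc⟩
  exact ⟨u, congrArg Subtype.val hu⟩

section CrossRow

variable {F : Type*} [Field F] [DecidableEq F] {q n : ℕ} {α : F}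

noncomputable def crossRow (q n : ℕ) (α : F) (i : Fin n) (c : F) :
    (Fin n × Fin (q - 1)) →₀ ℕ :=
  Finsupp.equivFunOnFinite.symm
    fun ij => if ij.1 = i ∧ α ^ ((ij.2 : ℕ) + 1) = c then 1 else 0

theorem crossF_eq_sum_crossRow (a : Fin n → F) :
    crossF q n α a = ∑ i, crossRow q n α i (a i) := by
  ext ij
  rw [Finsupp.finsetSum_apply,
    Fintype.sum_eq_single ij.1 fun i hi => by simp [crossRow, Ne.symm hi]]
  simp [crossF, crossRow]

theorem crossRow_zero (hα : orderOf α = q - 1) (i : Fin n) : crossRow q n α i 0 = 0 := by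
  ext ij
  have hα₀ : α ≠ 0 := ne_zero_of_orderOf_ne_zero (hα ▸ ij.2.pos.ne')
  simp [crossRow, hα₀]

theorem crossRow_pow_succ (hα : orderOf α = q - 1) (i : Fin n) (u : Fin (q - 1)) :
    crossRow q n α i (α ^ ((u : ℕ) + 1)) = Finsupp.single (i, u) 1 := by
  ext ij
  simp only [crossRow, Finsupp.equivFunOnFinite_symm_apply_apply, Finsupp.single_apply,
    ← (pow_succ_injective_of_orderOf_eq hα).eq_iff (a := ij.2), Prod.ext_iff, eq_comm (a := i),
    eq_comm (a := u)]

end CrossRow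

section AddIdeal

variable {F : Type*} [Field F] {q n : ℕ} {α : F} (K : Type*) [Field K]

theorem X_mul_X_sub_X_mem_addIdeal (i : Fin n) {u v w : Fin (q - 1)}
    (h : α ^ ((u : ℕ) + 1) + α ^ ((v : ℕ) + 1) = α ^ ((w : ℕ) + 1)) :
    X (i, u) * X (i, v) - X (i, w) ∈ addIdeal q n α K :=
  Ideal.subset_span (Or.inl ⟨i, u, v, w, h, rfl⟩)

theorem X_mul_X_sub_one_mem_addIdeal (i : Fin n) {u v : Fin (q - 1)}
    (h : α ^ ((u : ℕ) + 1) + α ^ ((v : ℕ) + 1) = 0) :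
    X (i, u) * X (i, v) - 1 ∈ addIdeal q n α K :=
  Ideal.subset_span (Or.inr ⟨i, u, v, h, rfl⟩)

theorem mk_monomial_crossRow_add [Fintype F] [DecidableEq F]
    (hα : orderOf α = Fintype.card F - 1) (i : Fin n) (c d : F) :
    Ideal.Quotient.mk (addIdeal (Fintype.card F) n α K)
        (monomial (crossRow _ n α i c + crossRow _ n α i d) 1) =
      Ideal.Quotient.mk (addIdeal _ n α K) (monomial (crossRow _ n α i (c + d)) 1) := by
  rcases eq_or_ne c 0 with rfl | hc
  · rw [crossRow_zero hα, zero_add, zero_add]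
  rcases eq_or_ne d 0 with rfl | hd
  · rw [crossRow_zero hα, add_zero, add_zero]
  obtain ⟨u, rfl⟩ := exists_pow_succ_eq_of_orderOf_eq hα hc
  obtain ⟨v, rfl⟩ := exists_pow_succ_eq_of_orderOf_eq hα hd
  rw [crossRow_pow_succ hα, crossRow_pow_succ hα, monomial_single_add, pow_one, Ideal.Quotient.eq]
  rcases eq_or_ne (α ^ ((u : ℕ) + 1) + α ^ ((v : ℕ) + 1)) 0 with h | h
  · rw [h, crossRow_zero hα, monomial_zero', C_1]
    exact X_mul_X_sub_one_mem_addIdeal K i h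
  · obtain ⟨w, hw⟩ := exists_pow_succ_eq_of_orderOf_eq hα h
    rw [← hw, crossRow_pow_succ hα]
    exact X_mul_X_sub_X_mem_addIdeal K i hw.symm

end AddIdeal

/-- for any a, b ∈ F_q^n, x^{▲a + ▲b} ≡ x^{▲(a+b)} mod I_q. -/
theorem stmt_8 {F : Type*} [Field F] [Fintype F] [DecidableEq F] (q n : ℕ)
    (hq : Fintype.card F = q) (α : F) (hα : orderOf α = q - 1)
    (K : Type*) [Field K] (a b : Fin n → F) :
    monomial (crossF q n α a + crossF q n α b) (1 : K)
      - monomial (crossF q n α (a + b)) 1 ∈ addIdeal q n α K := by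
  subst hq
  rw [← Ideal.Quotient.eq, crossF_eq_sum_crossRow, crossF_eq_sum_crossRow,
    crossF_eq_sum_crossRow, ← Finset.sum_add_distrib, monomial_sum_one, monomial_sum_one,
    map_prod, map_prod]
  exact Finset.prod_congr rfl fun i _ => mk_monomial_crossRow_add K hα i (a i) (b i)
end

section
/- Let C be a linear code over F_p with minimum distance d and error-correcting capability t = ⌊(d−1)/2⌋, and let G be a Gröbner basis for the code ideal I(C). Suppose w ∈ F_p^n, and the remainder of x^w on division by G is a monomial x^f with wt(f) ≤ t. Then if w = c + e for some codeword c ∈ C with wt(e) ≤ t, it follows that f = e and w − f = c; in particular w − f is the unique codeword within Hamming distance t of w. -/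
open MvPolynomial

/-- Exponent vector in {0,…,p−1}^n ⊆ ℕ^n of a word over F_p. -/
noncomputable def toExp {p n : ℕ} (c : Fin n → ZMod p) : Fin n →₀ ℕ :=
  Finsupp.equivFunOnFinite.symm fun i => (c i).val

/-!
Sending `x_i` to the class of the `i`-th unit vector in the group algebra `K[F_p^n ⧸ C]` kills
every generator of `I(C)`, so `x^w - x^f ∈ I(C)` forces `w - f ∈ C`. As `wt(f) ≤ t`, this codeword
lies within distance `t` of `w`, and so does `c`; two codewords within distance `t` of one word are
at distance at most `2t < d`, hence equal.
-/

lemma natCast_toExp {p n : ℕ} [NeZero p] (w : Fin n → ZMod p) :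
    (fun i => (toExp w i : ZMod p)) = w := by
  funext i
  simp [toExp]

namespace codeIdeal

variable {p n : ℕ} {K : Type*} [Field K] (C : Submodule (ZMod p) (Fin n → ZMod p))

noncomputable def toQuotient : (Fin n →₀ ℕ) →+ (Fin n → ZMod p) ⧸ C :=
  C.mkQ.toAddMonoidHom.comp
    (Finsupp.coeFnAddHom.comp (Finsupp.mapRange.addMonoidHom (Nat.castAddMonoidHom (ZMod p))))

lemma toQuotient_apply (a : Fin n →₀ ℕ) :
    toQuotient C a = Submodule.Quotient.mk (fun i => (a i : ZMod p)) := rfl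

noncomputable def toGroupAlgebra :
    MvPolynomial (Fin n) K →+* AddMonoidAlgebra K ((Fin n → ZMod p) ⧸ C) :=
  AddMonoidAlgebra.mapDomainRingHom K (toQuotient C)

lemma toGroupAlgebra_monomial (a : Fin n →₀ ℕ) :
    toGroupAlgebra C (monomial a (1 : K)) = AddMonoidAlgebra.single (toQuotient C a) 1 :=
  AddMonoidAlgebra.mapDomain_single

lemma toGroupAlgebra_monomial_sub_monomial_eq_zero_iff {a b : Fin n →₀ ℕ} :
    toGroupAlgebra C (monomial a (1 : K) - monomial b 1) = 0 ↔
      (fun i => (a i : ZMod p)) - (fun i => (b i : ZMod p)) ∈ C := by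
  rw [map_sub, sub_eq_zero, toGroupAlgebra_monomial, toGroupAlgebra_monomial,
    (AddMonoidAlgebra.single_left_injective one_ne_zero).eq_iff, toQuotient_apply,
    toQuotient_apply, Submodule.Quotient.eq]

lemma le_ker_toGroupAlgebra : codeIdeal p K C ≤ RingHom.ker (toGroupAlgebra (K := K) C) := by
  rw [codeIdeal, Ideal.span_le]
  rintro g (⟨a, b, hab, rfl⟩ | ⟨i, rfl⟩)
  · exact (toGroupAlgebra_monomial_sub_monomial_eq_zero_iff C).2 hab
  · rw [SetLike.mem_coe, RingHom.mem_ker, X_pow_eq_monomial, one_def,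
      toGroupAlgebra_monomial_sub_monomial_eq_zero_iff]
    convert C.zero_mem
    ext j
    rcases eq_or_ne i j with rfl | hij <;> simp [*]

theorem sub_mem_of_monomial_sub_mem {a b : Fin n →₀ ℕ}
    (h : monomial a (1 : K) - monomial b 1 ∈ codeIdeal p K C) :
    (fun i => (a i : ZMod p)) - (fun i => (b i : ZMod p)) ∈ C :=
  (toGroupAlgebra_monomial_sub_monomial_eq_zero_iff C).1 (le_ker_toGroupAlgebra C h)

end codeIdeal

theorem eq_of_hammingDist_le_of_mem {ι : Type*} [Fintype ι] {β : ι → Type*}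
    [∀ i, AddGroup (β i)] [∀ i, DecidableEq (β i)] {C : AddSubgroup (∀ i, β i)} {d : ℕ}
    (hd : ∀ c ∈ C, c ≠ 0 → d ≤ hammingNorm c) {c₁ c₂ w : ∀ i, β i} (hc₁ : c₁ ∈ C)
    (hc₂ : c₂ ∈ C) (h₁ : hammingDist w c₁ ≤ (d - 1) / 2) (h₂ : hammingDist w c₂ ≤ (d - 1) / 2) :
    c₁ = c₂ := by
  by_contra hne
  have hpos : 0 < hammingDist c₁ c₂ := hammingDist_pos.2 hne
  have hle : hammingDist c₁ c₂ ≤ hammingDist w c₁ + hammingDist w c₂ :=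
    hammingDist_triangle_left ..
  have hd_le : d ≤ hammingDist c₁ c₂ := by
    rw [hammingDist_eq_hammingNorm]
    exact hd _ (C.add_mem (C.neg_mem hc₁) hc₂) (neg_add_eq_zero.not.2 hne)
  omega

theorem hammingNorm_natCast_le_card_support {ι R : Type*} [Fintype ι] [DecidableEq R]
    [AddMonoidWithOne R] (f : ι →₀ ℕ) :
    hammingNorm (fun i => (f i : R)) ≤ f.support.card := by
  calc hammingNorm (fun i => (f i : R)) ≤ hammingNorm ⇑f :=
        hammingNorm_comp_le_hammingNorm (x := ⇑f) (fun _ (k : ℕ) => (k : R)) fun _ => Nat.cast_zero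
    _ = f.support.card := by
        rw [hammingNorm]
        congr 1
        ext i
        simp

/-- let C have minimum distance d and error-correcting capability
t = ⌊(d−1)/2⌋.  If the remainder of x^w on division by a Gröbner basis of I(C)
is a monomial x^f (so that x^w − x^f ∈ I(C)) with wt(f) ≤ t, and w = c + e for
a codeword c and an error e of weight ≤ t, then f = e and w − f = c; in
particular w − f is the unique codeword within Hamming distance t of w. -/
theorem stmt_17 (p : ℕ) (hp : p.Prime) (K : Type*) [Field K] (n d t : ℕ)
    (C : Submodule (ZMod p) (Fin n → ZMod p))
    (hd : ∀ c ∈ C, c ≠ (0 : Fin n → ZMod p) → d ≤ hammingNorm c)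
    (ht : t = (d - 1) / 2)
    (w c e : Fin n → ZMod p) (hc : c ∈ C) (hw : w = c + e)
    (he : hammingNorm e ≤ t)
    (f : Fin n →₀ ℕ)
    (hrem : monomial (toExp w) (1 : K) - monomial f 1 ∈ codeIdeal p K C)
    (hwf : f.support.card ≤ t) :
    (fun i => ((f i : ZMod p))) = e ∧
      w - (fun i => ((f i : ZMod p))) = c ∧
      ∀ c' ∈ C, hammingDist w c' ≤ t → c' = c := by
  have : NeZero p := ⟨hp.ne_zero⟩
  set fw : Fin n → ZMod p := fun i => (f i : ZMod p)
  have hfw_mem : w - fw ∈ C := by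
    simpa only [natCast_toExp] using codeIdeal.sub_mem_of_monomial_sub_mem C hrem
  have hfw_dist : hammingDist w (w - fw) ≤ t := by
    rw [hammingDist_comm, hammingDist_eq_hammingNorm, neg_sub, sub_add_cancel]
    exact (hammingNorm_natCast_le_card_support f).trans hwf
  have hc_dist : hammingDist w c ≤ t := by
    rwa [hammingDist_comm, hammingDist_eq_hammingNorm, hw, neg_add_cancel_left]
  have unique : ∀ c' ∈ C, hammingDist w c' ≤ t → c' = c := fun c' hc' h =>
    eq_of_hammingDist_le_of_mem (C := C.toAddSubgroup) hd hc' hc (ht ▸ h) (ht ▸ hc_dist)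
  have hfw_eq : w - fw = c := unique _ hfw_mem hfw_dist
  refine ⟨?_, hfw_eq, unique⟩
  rw [← sub_sub_cancel w fw, hfw_eq, hw, add_sub_cancel_left]
end
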